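/- Let q > 3 be a prime with q ≡ 7 (mod 8), K = Q(√-q), O_K its ring of integers, h the class number of K, and 𝔭 a prime ideal of O_K above 2. Then for every nonzero ideal 𝔞 of O_K coprime to 2O_K, there exists a unique element α ∈ O_K such that 𝔞^h = αO_K and α ≡ 1 (mod 𝔭²). (This gives the well-definedness of the Grossencharacter ρ of K of conductor 𝔭² with ρ(𝔞) = α.) -/

import Mathlib

open NumberField Polynomial
open scoped nonZeroDivisors

section Aux

variable {K : Type*} [Field K] [NumberField K]

private lemma rat_int {r : ℚ} (h : IsIntegral ℤ r) : ∃ m : ℤ, (m : ℚ) = r :=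
  IsIntegrallyClosed.isIntegral_iff.mp h

private lemma rat_sq_int {z : ℚ} {n : ℤ} (h : z ^ 2 = (n : ℚ)) : ∃ m : ℤ, (m : ℚ) = z := by
  refine rat_int ⟨X ^ 2 - C n, Polynomial.monic_X_pow_sub_C n two_ne_zero, ?_⟩
  rw [eval₂_sub, eval₂_pow, eval₂_X, eval₂_C, eq_intCast, h, sub_self]

variable {q : ℕ} {β : K}

private lemma beta_not_rat (hq0 : 0 < q) (hβ : β ^ 2 = -(q : K)) (r : ℚ) :
    algebraMap ℚ K r ≠ β := by
  intro h
  have h2 : algebraMap ℚ K (r ^ 2 + q) = algebraMap ℚ K 0 := by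
    rw [map_add, map_pow, h, hβ]
    simp
  have h3 : (r ^ 2 + q : ℚ) = 0 := (algebraMap ℚ K).injective h2
  have hq : (0 : ℚ) < q := by exact_mod_cast hq0
  nlinarith [sq_nonneg r]

private lemma beta_li (hq0 : 0 < q) (hβ : β ^ 2 = -(q : K)) :
    LinearIndependent ℚ ![(1 : K), β] := by
  rw [linearIndependent_fin2]
  constructor
  · show β ≠ 0
    intro h
    rw [h] at hβ
    have h1 : (q : K) = 0 := by rw [← neg_eq_zero, ← hβ]; ring
    exact hq0.ne' (by exact_mod_cast h1)
  · show ∀ a : ℚ, a • β ≠ (1 : K)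
    intro a ha
    have ha0 : a ≠ 0 := by rintro rfl; simp at ha
    refine beta_not_rat hq0 hβ a⁻¹ ?_
    rw [Algebra.algebraMap_eq_smul_one, ← ha, smul_smul, inv_mul_cancel₀ ha0, one_smul]

/-- The basis `{1, β}` of `K` over `ℚ`. -/
private noncomputable def BB (hq0 : 0 < q) (hdeg : Module.finrank ℚ K = 2)
    (hβ : β ^ 2 = -(q : K)) : Module.Basis (Fin 2) ℚ K :=
  basisOfLinearIndependentOfCardEqFinrank (beta_li hq0 hβ) (by simp [hdeg])

private lemma BB0 (hq0 : 0 < q) (hdeg : Module.finrank ℚ K = 2) (hβ : β ^ 2 = -(q : K)) :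
    BB hq0 hdeg hβ 0 = 1 := by
  rw [BB, coe_basisOfLinearIndependentOfCardEqFinrank]
  simp

private lemma BB1 (hq0 : 0 < q) (hdeg : Module.finrank ℚ K = 2) (hβ : β ^ 2 = -(q : K)) :
    BB hq0 hdeg hβ 1 = β := by
  rw [BB, coe_basisOfLinearIndependentOfCardEqFinrank]
  simp

private lemma coords (hq0 : 0 < q) (hdeg : Module.finrank ℚ K = 2) (hβ : β ^ 2 = -(q : K))
    (x : K) : ∃ a b : ℚ, x = algebraMap ℚ K a + algebraMap ℚ K b * β := by
  have h := (BB hq0 hdeg hβ).sum_repr x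
  rw [Fin.sum_univ_two] at h
  refine ⟨(BB hq0 hdeg hβ).repr x 0, (BB hq0 hdeg hβ).repr x 1, ?_⟩
  conv_lhs => rw [← h]
  rw [BB0 hq0 hdeg hβ, BB1 hq0 hdeg hβ, Algebra.smul_def, Algebra.smul_def, mul_one]

private lemma repr_combo (hq0 : 0 < q) (hdeg : Module.finrank ℚ K = 2) (hβ : β ^ 2 = -(q : K))
    (a b : ℚ) :
    (BB hq0 hdeg hβ).repr (algebraMap ℚ K a + algebraMap ℚ K b * β)
      = Finsupp.single 0 a + Finsupp.single 1 b := by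
  set B := BB hq0 hdeg hβ with hB
  have hx : algebraMap ℚ K a + algebraMap ℚ K b * β = a • B 0 + b • B 1 := by
    rw [BB0 hq0 hdeg hβ, BB1 hq0 hdeg hβ, Algebra.smul_def, Algebra.smul_def, mul_one]
  rw [hx, map_add, map_smul, map_smul, B.repr_self, B.repr_self]
  ext i
  simp [Finsupp.single_apply]

private lemma mul_beta_combo (hβ : β ^ 2 = -(q : K)) (a b : ℚ) :
    (algebraMap ℚ K a + algebraMap ℚ K b * β) * β
      = algebraMap ℚ K (-(q * b)) + algebraMap ℚ K a * β := by
  have hq : algebraMap ℚ K (q : ℚ) = (q : K) := by push_cast; ring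
  rw [map_neg, map_mul, hq]
  linear_combination algebraMap ℚ K b * hβ

private lemma norm_combo (hq0 : 0 < q) (hdeg : Module.finrank ℚ K = 2) (hβ : β ^ 2 = -(q : K))
    (a b : ℚ) :
    Algebra.norm ℚ (algebraMap ℚ K a + algebraMap ℚ K b * β) = a ^ 2 + q * b ^ 2 := by
  set B := BB hq0 hdeg hβ with hB
  set x := algebraMap ℚ K a + algebraMap ℚ K b * β with hx
  rw [Algebra.norm_eq_matrix_det B, Matrix.det_fin_two]
  have e00 : Algebra.leftMulMatrix B x 0 0 = a := by
    rw [Algebra.leftMulMatrix_eq_repr_mul, BB0 hq0 hdeg hβ, mul_one, hx,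
      repr_combo hq0 hdeg hβ]
    simp
  have e10 : Algebra.leftMulMatrix B x 1 0 = b := by
    rw [Algebra.leftMulMatrix_eq_repr_mul, BB0 hq0 hdeg hβ, mul_one, hx,
      repr_combo hq0 hdeg hβ]
    simp
  have e01 : Algebra.leftMulMatrix B x 0 1 = -(q * b) := by
    rw [Algebra.leftMulMatrix_eq_repr_mul, BB1 hq0 hdeg hβ, hx, mul_beta_combo hβ,
      repr_combo hq0 hdeg hβ]
    simp
  have e11 : Algebra.leftMulMatrix B x 1 1 = a := by
    rw [Algebra.leftMulMatrix_eq_repr_mul, BB1 hq0 hdeg hβ, hx, mul_beta_combo hβ,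
      repr_combo hq0 hdeg hβ]
    simp
  rw [e00, e11, e01, e10]
  ring

private lemma trace_combo (hq0 : 0 < q) (hdeg : Module.finrank ℚ K = 2) (hβ : β ^ 2 = -(q : K))
    (a b : ℚ) :
    Algebra.trace ℚ K (algebraMap ℚ K a + algebraMap ℚ K b * β) = 2 * a := by
  set B := BB hq0 hdeg hβ with hB
  set x := algebraMap ℚ K a + algebraMap ℚ K b * β with hx
  rw [Algebra.trace_eq_matrix_trace B, Matrix.trace_fin_two]
  have e00 : Algebra.leftMulMatrix B x 0 0 = a := by
    rw [Algebra.leftMulMatrix_eq_repr_mul, BB0 hq0 hdeg hβ, mul_one, hx,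
      repr_combo hq0 hdeg hβ]
    simp
  have e11 : Algebra.leftMulMatrix B x 1 1 = a := by
    rw [Algebra.leftMulMatrix_eq_repr_mul, BB1 hq0 hdeg hβ, hx, mul_beta_combo hβ,
      repr_combo hq0 hdeg hβ]
    simp
  rw [e00, e11]
  ring

end Aux

set_option maxHeartbeats 1600000 in
set_option synthInstance.maxHeartbeats 400000 in
/-- Let `q > 3` be a prime with `q ≡ 7 (mod 8)`, `K = ℚ(√-q)`, `h` its class number, and
`𝔭` a prime ideal of `𝓞_K` above `2`. For every nonzero ideal `𝔞` of `𝓞_K` coprime to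
`2𝓞_K` there is a unique `α ∈ 𝓞_K` with `𝔞^h = α𝓞_K` and `α ≡ 1 (mod 𝔭²)`. -/
theorem grossencharacter_well_defined_seven_mod_eight
    (q : ℕ) (hq : q.Prime) (hq3 : 3 < q) (hq8 : q % 8 = 7)
    (K : Type*) [Field K] [NumberField K] (hdeg : Module.finrank ℚ K = 2)
    (β : K) (hβ : β ^ 2 = -(q : K))
    (p : Ideal (𝓞 K)) (hp : p.IsPrime) (h2 : (2 : 𝓞 K) ∈ p)
    (𝔞 : Ideal (𝓞 K)) (h𝔞 : 𝔞 ≠ ⊥)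
    (hcop : IsCoprime 𝔞 (Ideal.span {(2 : 𝓞 K)})) :
    ∃! α : 𝓞 K,
      𝔞 ^ NumberField.classNumber K = Ideal.span {α} ∧ α - 1 ∈ p ^ 2 := by
  classical
  haveI : p.IsPrime := hp
  have hq0 : 0 < q := by omega
  have hq7 : 7 ≤ q := by omega
  -- units of 𝓞 K are ±1
  have unit_pm : ∀ u : 𝓞 K, IsUnit u → u = 1 ∨ u = -1 := by
    intro u hu
    obtain ⟨a, b, hab⟩ := coords hq0 hdeg hβ (u : K)
    have hspan : Ideal.span {u} = ⊤ := Ideal.span_singleton_eq_top.mpr hu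
    have habs : Ideal.absNorm (Ideal.span {u}) = 1 := by
      rw [hspan]; exact Ideal.absNorm_eq_one_iff.mpr rfl
    rw [Ideal.absNorm_span_singleton] at habs
    have hnormZ : Algebra.norm ℤ u = 1 ∨ Algebra.norm ℤ u = -1 := by
      rcases Int.natAbs_eq_iff.mp habs with h | h
      · left; exact_mod_cast h
      · right; exact_mod_cast h
    have hnQ : Algebra.norm ℚ ((u : 𝓞 K) : K) = ((Algebra.norm ℤ u : ℤ) : ℚ) :=
      (Algebra.coe_norm_int u).symm
    have hN : a ^ 2 + q * b ^ 2 = 1 := by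
      have h1 : Algebra.norm ℚ ((u : 𝓞 K) : K) = a ^ 2 + q * b ^ 2 := by
        rw [hab]; exact norm_combo hq0 hdeg hβ a b
      have hqQ : (0:ℚ) < q := by exact_mod_cast hq0
      rcases hnormZ with h | h
      · rw [h] at hnQ; rw [h1] at hnQ; exact_mod_cast hnQ
      · rw [h] at hnQ; rw [h1] at hnQ
        exfalso
        have : a ^ 2 + (q:ℚ) * b ^ 2 = -1 := by exact_mod_cast hnQ
        nlinarith [sq_nonneg a, sq_nonneg b]
    -- the conjugate is the inverse
    have hone : (algebraMap ℚ K a) ^ 2 + (q : K) * (algebraMap ℚ K b) ^ 2 = 1 := by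
      have := congrArg (algebraMap ℚ K) hN
      simp only [map_add, map_mul, map_pow, map_one] at this
      rwa [show algebraMap ℚ K (q:ℚ) = (q:K) by push_cast; ring] at this
    have hxinv : ((u : 𝓞 K) : K) * (algebraMap ℚ K (2 * a) - ((u : 𝓞 K) : K)) = 1 := by
      rw [hab, map_mul, show algebraMap ℚ K (2:ℚ) = (2:K) by simp]
      linear_combination hone - (algebraMap ℚ K b) ^ 2 * hβ
    have hx0 : ((u : 𝓞 K) : K) ≠ 0 := by
      intro h0
      rw [h0, zero_mul] at hxinv
      exact zero_ne_one hxinv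
    have huv : u * (↑hu.unit⁻¹ : 𝓞 K) = 1 := by
      have := hu.unit.mul_inv
      rwa [hu.unit_spec] at this
    have hy : ((↑hu.unit⁻¹ : 𝓞 K) : K) = algebraMap ℚ K (2 * a) - ((u : 𝓞 K) : K) := by
      apply mul_left_cancel₀ hx0
      rw [hxinv]
      have := congrArg (algebraMap (𝓞 K) K) huv
      rwa [map_mul, map_one] at this
    have hint : IsIntegral ℤ (algebraMap ℚ K (2 * a)) := by
      have heq : algebraMap ℚ K (2 * a) = ((u : 𝓞 K) : K) + ((↑hu.unit⁻¹ : 𝓞 K) : K) := by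
        rw [hy]; ring
      rw [heq]
      exact (NumberField.RingOfIntegers.isIntegral_coe u).add
        (NumberField.RingOfIntegers.isIntegral_coe _)
    rw [isIntegral_algebraMap_iff (algebraMap ℚ K).injective] at hint
    obtain ⟨t, ht⟩ := rat_int hint
    by_cases hb : b = 0
    · subst hb
      have ha2 : (a - 1) * (a + 1) = 0 := by nlinarith [hN]
      rcases mul_eq_zero.mp ha2 with h | h
      · left
        have ha1 : a = 1 := by linarith
        apply NumberField.RingOfIntegers.ext
        rw [hab, ha1]
        simp
      · right
        have ha1 : a = -1 := by linarith
        apply NumberField.RingOfIntegers.ext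
        rw [hab, ha1]
        push_cast
        simp
    · exfalso
      have hqb : (q : ℚ) * (2 * b) ^ 2 = 4 - (t : ℚ) ^ 2 := by
        have h2a : ((2 : ℚ) * a) ^ 2 = (t : ℚ) ^ 2 := by rw [ht]
        linear_combination 4 * hN - h2a
      have hqQ : (0:ℚ) < q := by exact_mod_cast hq0
      have hpos : 0 < (q : ℚ) * (2 * b) ^ 2 := by positivity
      have ht4 : (t : ℚ) ^ 2 < 4 := by linarith
      have ht4' : t ^ 2 < 4 := by exact_mod_cast ht4
      set e : ℤ := 4 - t ^ 2 with he
      have he1 : 1 ≤ e := by have := sq_nonneg t; omega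
      have he4 : e ≤ 4 := by have := sq_nonneg t; omega
      have hz : ((q : ℚ) * (2 * b)) ^ 2 = ((q * e : ℤ) : ℚ) := by
        push_cast [he]
        linear_combination (q : ℚ) * hqb
      obtain ⟨w, hw⟩ := rat_sq_int hz
      have hwsq : w ^ 2 = q * e := by
        have hcast : ((w : ℚ)) ^ 2 = ((q * e : ℤ) : ℚ) := by rw [hw]; exact hz
        exact_mod_cast hcast
      have hqprime : Prime (q : ℤ) := Nat.prime_iff_prime_int.mp hq
      have hqw : (q : ℤ) ∣ w := hqprime.dvd_of_dvd_pow (n := 2) ⟨e, hwsq⟩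
      obtain ⟨w', rfl⟩ := hqw
      have hqe : (q : ℤ) ∣ e := by
        refine ⟨w' ^ 2, ?_⟩
        have hq0' : (q : ℤ) ≠ 0 := by exact_mod_cast hq0.ne'
        apply mul_left_cancel₀ hq0'
        rw [← hwsq]; ring
      have := Int.le_of_dvd (by omega) hqe
      have hq7' : (7 : ℤ) ≤ (q : ℤ) := by exact_mod_cast hq7
      omega
  -- basic facts about p
  have h20 : (2 : 𝓞 K) ≠ 0 := by
    intro h
    have : ((2 : 𝓞 K) : K) = 0 := by rw [h]; push_cast; ring
    norm_num at this
  have hpbot : p ≠ ⊥ := by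
    intro h
    rw [h] at h2
    exact h20 (Ideal.mem_bot.mp h2)
  have habsmul : ∀ I J : Ideal (𝓞 K),
      Ideal.absNorm (I * J) = Ideal.absNorm I * Ideal.absNorm J := fun I J =>
    _root_.map_mul Ideal.absNorm I J
  have habs2 : Ideal.absNorm (Ideal.span {(2 : 𝓞 K)}) = 4 := by
    rw [Ideal.absNorm_span_singleton,
      show (2 : 𝓞 K) = algebraMap ℤ (𝓞 K) 2 by simp,
      Algebra.norm_algebraMap_of_basis (Module.Free.chooseBasis ℤ (𝓞 K)),
      show Fintype.card (Module.Free.ChooseBasisIndex ℤ (𝓞 K)) = 2 by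
        rw [← Module.finrank_eq_card_chooseBasisIndex, NumberField.RingOfIntegers.rank, hdeg]]
    rfl
  -- theta
  have h8 : 8 * ((q + 1) / 8) = q + 1 := by omega
  set m : ℕ := (q + 1) / 8 with hmdef
  have hm8 : (8 : K) * (m : K) = (q : K) + 1 := by
    have := congrArg (fun n : ℕ => (n : K)) h8
    push_cast at this
    exact this
  have hθ : IsIntegral ℤ ((1 + β) / 2) := by
    refine ⟨X ^ 2 + (C (2 * (m : ℤ)) - X), ?_, ?_⟩
    · apply Polynomial.monic_X_pow_add
      refine lt_of_le_of_lt (Polynomial.degree_sub_le _ _) ?_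
      rw [Polynomial.degree_X]
      exact max_lt (lt_of_le_of_lt Polynomial.degree_C_le (by decide)) (by decide)
    · rw [eval₂_add, eval₂_sub, eval₂_pow, eval₂_X, eval₂_C, eq_intCast]
      push_cast
      linear_combination ((1:K)/4) * hβ + ((1:K)/4) * hm8
  set T : 𝓞 K := ⟨(1 + β) / 2, hθ⟩ with hTdef
  have hTK : (T : K) = (1 + β) / 2 := rfl
  have hTT : T * (1 - T) = 2 * (m : 𝓞 K) := by
    apply NumberField.RingOfIntegers.ext
    have hL : ((T * (1 - T) : 𝓞 K) : K) = (T : K) * (1 - (T : K)) := by push_cast; ring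
    have hR : ((2 * (m : 𝓞 K) : 𝓞 K) : K) = 2 * (m : K) := by
      show algebraMap (𝓞 K) K (2 * (m : 𝓞 K)) = 2 * (m : K)
      rw [map_mul, map_ofNat, map_natCast]
    rw [hL, hR, hTK]
    linear_combination (-(1:K)/4) * hβ - ((1:K)/4) * hm8
  have key_half : ∀ w : 𝓞 K, ∀ c : ℚ,
      (w : K) = algebraMap ℚ K (1/4) + algebraMap ℚ K c * β → False := by
    intro w c hwc
    have htr : Algebra.trace ℚ K (w : K) = 1/2 := by
      rw [hwc, trace_combo hq0 hdeg hβ]; norm_num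
    have hint := Algebra.isIntegral_trace (R := ℤ) (L := ℚ) (F := K)
      (NumberField.RingOfIntegers.isIntegral_coe w)
    rw [htr] at hint
    obtain ⟨n, hn⟩ := rat_int hint
    have h1 : ((2 * n : ℤ) : ℚ) = 1 := by push_cast; linear_combination 2 * hn
    have h1' : (2 * n : ℤ) = 1 := by exact_mod_cast h1
    omega
  have hTnot : T ∉ Ideal.span {(2 : 𝓞 K)} := by
    intro hmem
    obtain ⟨w, hw⟩ := Ideal.mem_span_singleton'.mp hmem
    have hwK : (w : K) * 2 = (1 + β) / 2 := by
      have := congrArg (algebraMap (𝓞 K) K) hw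
      rw [map_mul] at this
      rw [show algebraMap (𝓞 K) K 2 = (2:K) from map_ofNat _ 2] at this
      rw [this]; exact hTK
    refine key_half w (1/4) ?_
    rw [show algebraMap ℚ K (1/4) = (1:K)/4 by rw [show (1/4 : ℚ) = (4 : ℚ)⁻¹ by norm_num, map_inv₀, map_ofNat, one_div]]
    linear_combination ((1:K)/2) * hwK
  have h1Tnot : (1 - T) ∉ Ideal.span {(2 : 𝓞 K)} := by
    intro hmem
    obtain ⟨w, hw⟩ := Ideal.mem_span_singleton'.mp hmem
    have hwK : (w : K) * 2 = 1 - (1 + β) / 2 := by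
      have := congrArg (algebraMap (𝓞 K) K) hw
      rw [map_mul] at this
      rw [show algebraMap (𝓞 K) K 2 = (2:K) from map_ofNat _ 2] at this
      rw [this, map_sub, map_one, show algebraMap (𝓞 K) K T = (T : K) from rfl, hTK]
    refine key_half w (-(1/4)) ?_
    rw [show algebraMap ℚ K (1/4) = (1:K)/4 by rw [show (1/4 : ℚ) = (4 : ℚ)⁻¹ by norm_num, map_inv₀, map_ofNat, one_div],
      show algebraMap ℚ K (-(1/4)) = -((1:K)/4) by rw [map_neg, show (1/4 : ℚ) = (4 : ℚ)⁻¹ by norm_num, map_inv₀, map_ofNat, one_div]]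
    linear_combination ((1:K)/2) * hwK
  have hTTmem : ∀ I : Ideal (𝓞 K), Ideal.span {(2 : 𝓞 K)} = I → T * (1 - T) ∈ I := by
    intro I hI
    rw [← hI]
    exact Ideal.mem_span_singleton'.mpr ⟨(m : 𝓞 K), by rw [hTT]; ring⟩
  have hle2p : Ideal.span {(2 : 𝓞 K)} ≤ p := (Ideal.span_singleton_le_iff_mem _).mpr h2
  -- absNorm p = 2
  have hpnorm : Ideal.absNorm p = 2 := by
    have hdvd4 : Ideal.absNorm p ∣ 4 := habs2 ▸ Ideal.absNorm_dvd_absNorm_of_le hle2p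
    have hne1 : Ideal.absNorm p ≠ 1 := by
      simp only [Ne, Ideal.absNorm_eq_one_iff]; exact hp.ne_top
    have hne4 : Ideal.absNorm p ≠ 4 := by
      intro h4
      obtain ⟨C, hC⟩ := Ideal.dvd_iff_le.mpr hle2p
      have h4' : (4 : ℕ) = 4 * Ideal.absNorm C := by
        conv_lhs => rw [← habs2]
        rw [hC, habsmul p C, h4]
      have hC1 : Ideal.absNorm C = 1 := by omega
      rw [Ideal.absNorm_eq_one_iff] at hC1
      rw [hC1, Ideal.mul_top] at hC
      have := hTTmem p hC
      rcases hp.mem_or_mem this with hmem | hmem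
      · exact hTnot (by rw [hC]; exact hmem)
      · exact h1Tnot (by rw [hC]; exact hmem)
    have hmem4 : Ideal.absNorm p ∈ Nat.divisors 4 := Nat.mem_divisors.mpr ⟨hdvd4, by norm_num⟩
    have hdiv4 : Nat.divisors 4 = {1, 2, 4} := by decide
    rw [hdiv4] at hmem4
    simp only [Finset.mem_insert, Finset.mem_singleton] at hmem4
    omega
  -- residue field has two elements
  have F1 : ∀ x : 𝓞 K, x ∈ p ∨ x - 1 ∈ p := by
    have hcard : Nat.card ((𝓞 K) ⧸ p) = 2 := by
      rw [← Submodule.cardQuot_apply, ← Ideal.absNorm_apply, hpnorm]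
    have h01 : (Ideal.Quotient.mk p 1) ≠ 0 := by
      rw [Ne, Ideal.Quotient.eq_zero_iff_mem]
      intro h1
      exact hp.ne_top (Ideal.eq_top_iff_one p |>.mpr h1)
    obtain ⟨y, hy, hyuniq⟩ := (Nat.card_eq_two_iff' (0 : (𝓞 K) ⧸ p)).mp hcard
    intro x
    by_cases hx : Ideal.Quotient.mk p x = 0
    · left; exact Ideal.Quotient.eq_zero_iff_mem.mp hx
    · right
      have e1 : Ideal.Quotient.mk p x = y := hyuniq _ hx
      have e2 : Ideal.Quotient.mk p 1 = y := hyuniq _ h01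
      have : Ideal.Quotient.mk p (x - 1) = 0 := by
        rw [map_sub, e1, e2, sub_self]
      exact Ideal.Quotient.eq_zero_iff_mem.mp this
  -- 2 ∉ p^2
  have F3 : (2 : 𝓞 K) ∉ p ^ 2 := by
    intro h22
    have hle2 : Ideal.span {(2 : 𝓞 K)} ≤ p ^ 2 := (Ideal.span_singleton_le_iff_mem _).mpr h22
    obtain ⟨C, hC⟩ := Ideal.dvd_iff_le.mpr hle2
    rw [pow_two] at hC
    have h4' : (4 : ℕ) = 4 * Ideal.absNorm C := by
      conv_lhs => rw [← habs2]
      rw [hC, habsmul (p * p) C, habsmul p p, hpnorm]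
    rw [← pow_two] at hC
    have hC1 : Ideal.absNorm C = 1 := by omega
    rw [Ideal.absNorm_eq_one_iff] at hC1
    rw [hC1, Ideal.mul_top] at hC
    have hmem := hTTmem (p ^ 2) hC
    have d1 := Ideal.IsPrime.mul_mem_pow p (a := T) (b := 1 - T) hmem
    have d2 := Ideal.IsPrime.mem_pow_mul p (a := T) (b := 1 - T) hmem
    rcases d1 with hd1 | hd1
    · rcases d2 with hd2 | hd2
      · exact hTnot (by rw [hC]; exact hd2)
      · have : (1 : 𝓞 K) ∈ p := by
          have := Ideal.add_mem p hd1 hd2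
          simpa using this
        exact hp.ne_top ((Ideal.eq_top_iff_one p).mpr this)
    · exact h1Tnot (by rw [hC]; exact hd1)
  -- structure of p / p^2
  have F2 : ∀ y ∈ p, y ∈ p ^ 2 ∨ y - 2 ∈ p ^ 2 := by
    have hsup : p ^ 2 ⊔ Ideal.span {(2 : 𝓞 K)} = p := by
      have hJle : p ^ 2 ⊔ Ideal.span {(2 : 𝓞 K)} ≤ p :=
        sup_le (Ideal.pow_le_self two_ne_zero) hle2p
      have hdvd : (p ^ 2 ⊔ Ideal.span {(2 : 𝓞 K)}) ∣ p ^ 2 :=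
        Ideal.dvd_iff_le.mpr le_sup_left
      have hprime : Prime p := Ideal.prime_of_isPrime hpbot hp
      obtain ⟨i, hi2, hass⟩ := (dvd_prime_pow hprime 2).mp hdvd
      have heq : p ^ 2 ⊔ Ideal.span {(2 : 𝓞 K)} = p ^ i := associated_iff_eq.mp hass
      interval_cases i
      · exfalso
        rw [pow_zero, Ideal.one_eq_top] at heq
        rw [heq] at hJle
        exact hp.ne_top (top_le_iff.mp hJle)
      · rw [heq, pow_one]
      · exfalso
        apply F3
        rw [← heq]
        exact Submodule.mem_sup_right (Ideal.mem_span_singleton_self _)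
    intro y hy
    rw [← hsup] at hy
    obtain ⟨u', hu', v, hv, huv⟩ := Submodule.mem_sup.mp hy
    obtain ⟨r, hr⟩ := Ideal.mem_span_singleton'.mp hv
    have hmul : ∀ s : 𝓞 K, s ∈ p → s * 2 ∈ p ^ 2 := by
      intro s hs
      rw [pow_two]
      exact Ideal.mul_mem_mul hs h2
    rcases F1 r with hr1 | hr1
    · left
      have : y = u' + r * 2 := by rw [← huv, hr]
      rw [this]
      exact Ideal.add_mem _ hu' (hmul r hr1)
    · right
      have : y - 2 = u' + (r - 1) * 2 := by rw [← huv, ← hr]; ring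
      rw [this]
      exact Ideal.add_mem _ hu' (hmul (r - 1) hr1)
  -- every unit mod p^2 is ±1
  have F4 : ∀ x : 𝓞 K, x ∉ p → x - 1 ∈ p ^ 2 ∨ x + 1 ∈ p ^ 2 := by
    intro x hx
    rcases F1 x with h | h
    · exact absurd h hx
    rcases F2 (x - 1) h with h' | h'
    · left; exact h'
    · right
      have h4 : (2 : 𝓞 K) * 2 ∈ p ^ 2 := by
        rw [pow_two]; exact Ideal.mul_mem_mul h2 h2
      have : x + 1 = (x - 1 - 2) + 2 * 2 := by ring
      rw [this]
      exact Ideal.add_mem _ h' h4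
  -- principal generator of 𝔞 ^ h
  have hmem𝔞 : 𝔞 ∈ (Ideal (𝓞 K))⁰ :=
    mem_nonZeroDivisors_iff_ne_zero.mpr (by simpa using h𝔞)
  have hmemA : 𝔞 ^ NumberField.classNumber K ∈ (Ideal (𝓞 K))⁰ := pow_mem hmem𝔞 _
  have hprinc : (𝔞 ^ NumberField.classNumber K).IsPrincipal := by
    refine (ClassGroup.mk0_eq_one_iff hmemA).mp ?_
    have hpoweq : (⟨𝔞 ^ NumberField.classNumber K, hmemA⟩ : (Ideal (𝓞 K))⁰)
        = (⟨𝔞, hmem𝔞⟩ : (Ideal (𝓞 K))⁰) ^ NumberField.classNumber K := rfl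
    rw [hpoweq, map_pow, NumberField.classNumber]
    exact pow_card_eq_one
  obtain ⟨α₀, hα₀⟩ := hprinc.principal
  rw [Ideal.submodule_span_eq] at hα₀
  have hα₀p : α₀ ∉ p := by
    intro hmem
    have h1 : 𝔞 ^ NumberField.classNumber K ≤ p := by
      rw [hα₀]
      exact (Ideal.span_singleton_le_iff_mem _).mpr hmem
    have ha : 𝔞 ≤ p := Ideal.IsPrime.le_of_pow_le h1
    obtain ⟨u, v, huv⟩ := hcop
    have htop : (⊤ : Ideal (𝓞 K)) ≤ p := by
      rw [← Ideal.one_eq_top, ← huv]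
      rw [Submodule.add_eq_sup]
      exact sup_le (le_trans Ideal.mul_le_right ha) (le_trans Ideal.mul_le_right hle2p)
    exact hp.ne_top (top_le_iff.mp htop)
  -- uniqueness helper
  have huniq : ∀ γ γ' : 𝓞 K,
      𝔞 ^ NumberField.classNumber K = Ideal.span {γ} → γ - 1 ∈ p ^ 2 →
      𝔞 ^ NumberField.classNumber K = Ideal.span {γ'} → γ' - 1 ∈ p ^ 2 → γ = γ' := by
    intro γ γ' hg hg2 hg' hg2'
    have hass : Associated γ γ' := Ideal.span_singleton_eq_span_singleton.mp (by rw [← hg, hg'])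
    obtain ⟨w, hw⟩ := hass
    rcases unit_pm (w : 𝓞 K) w.isUnit with h1 | h1
    · rw [← hw, h1, mul_one]
    · exfalso
      have hγ' : γ' = -γ := by rw [← hw, h1]; ring
      have hsum : (γ - 1) + (γ' - 1) = -2 := by rw [hγ']; ring
      have hneg : (-2 : 𝓞 K) ∈ p ^ 2 := hsum ▸ Ideal.add_mem _ hg2 hg2'
      have h2' : (2 : 𝓞 K) = -(-2) := by ring
      exact F3 (by rw [h2']; exact Submodule.neg_mem _ hneg)
  rcases F4 α₀ hα₀p with hc | hc
  · exact ⟨α₀, ⟨hα₀, hc⟩, fun y hy => huniq y α₀ hy.1 hy.2 hα₀ hc⟩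
  · refine ⟨-α₀, ⟨?_, ?_⟩, fun y hy => huniq y (-α₀) hy.1 hy.2 ?_ ?_⟩
    · rw [hα₀, Ideal.span_singleton_neg]
    · have : -α₀ - 1 = -(α₀ + 1) := by ring
      rw [this]
      exact Submodule.neg_mem _ hc
    · rw [hα₀, Ideal.span_singleton_neg]
    · have : -α₀ - 1 = -(α₀ + 1) := by ring
      rw [this]
      exact Submodule.neg_mem _ hc
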